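/- arXiv:math/0505535 — 2 statements merged into one kernel-verified Lean document; each statement's English description precedes it below -/
import Mathlib

section
/- Let d be a positive integer. The group O(A)/{±id}, where A is the discriminant group of the lattice ⟨-2d⟩ ⊕ U⊕U ⊕ E8(-1)⊕E8(-1) (so A ≅ Z/2d with quadratic form q(x) = -x²/2d mod 2Z), is an elementary abelian 2-group of order 2^{p(d)-1}, where p(1)=1 and p(d) is the number of distinct primes dividing d for d ≥ 2. -/
/-!
Every element of `K` is the reduction of a square root of unity modulo `4d`, so `K ⧸ N` has
exponent 2. To count, let `S` be the group of square roots of unity in `(ZMod (4d))ˣ`. For even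
`m`, the kernel of the reduction `(ZMod (2m))ˣ → (ZMod m)ˣ` has order `φ(2m)/φ(m) = 2` and
consists of square roots of unity (`u ≡ 1 mod m` forces `u² ≡ 1 mod 2m`), so `S` is twice as
large as its image `K`. By the Chinese remainder theorem `|S|` is multiplicative in the modulus;
it is `2` for moduli with cyclic unit group (odd prime powers and `4`), and `4` for `2^k`,
`k ≥ 3`, by the same halving argument, the image in `ZMod (2^(k-1))` then being `{±1}`.
Hence `|S| = 2^(p(d)+1)`, and `N = {±1}` has order 2 as soon as `d ≥ 2`.
-/

theorem Int.two_pow_dvd_sub_one_or_add_one {z : ℤ} (k : ℕ) (h : 2 ^ (k + 2) ∣ z ^ 2 - 1) :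
    2 ^ (k + 1) ∣ z - 1 ∨ 2 ^ (k + 1) ∣ z + 1 := by
  obtain ⟨a, rfl⟩ : Odd z := by
    rw [← Int.not_even_iff_odd]
    rintro ⟨b, rfl⟩
    have : (2 : ℤ) ∣ 4 * b ^ 2 - 1 := by
      simpa [← two_mul, mul_pow] using (dvd_pow_self 2 (by omega)).trans h
    generalize b ^ 2 = c at this
    omega
  have hprod : 2 ^ k ∣ a * (a + 1) := by
    rw [show (2 * a + 1) ^ 2 - 1 = 2 ^ 2 * (a * (a + 1)) by ring, pow_add, mul_comm] at h
    exact (mul_dvd_mul_iff_left (by norm_num)).mp h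
  rcases Int.even_or_odd a with ha | ha
  · have hodd : ¬ (2 : ℤ) ∣ a + 1 := by
      rw [← even_iff_two_dvd]
      exact Int.not_even_iff_odd.mpr ha.add_one
    left
    simpa [pow_succ', mul_dvd_mul_iff_left] using
      Int.prime_two.pow_dvd_of_dvd_mul_right k hodd hprod
  · have hodd : ¬ (2 : ℤ) ∣ a := by
      rw [← even_iff_two_dvd]
      exact Int.not_even_iff_odd.mpr ha
    right
    rw [show 2 * a + 1 + 1 = 2 * (a + 1) by ring, pow_succ']
    exact mul_dvd_mul_left 2 (Int.prime_two.pow_dvd_of_dvd_mul_left k hodd hprod)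

theorem card_rootsOfUnity_prod (k : ℕ) (M N : Type*) [CommMonoid M] [CommMonoid N] :
    Nat.card (rootsOfUnity k (M × N)) =
      Nat.card (rootsOfUnity k M) * Nat.card (rootsOfUnity k N) := by
  rw [← Nat.card_prod]
  refine Nat.card_congr ((MulEquiv.prodUnits.toEquiv.subtypeEquiv fun ζ ↦ ?_).trans
    (Equiv.subtypeProdEquivProd (p := (· ∈ rootsOfUnity k M)) (q := (· ∈ rootsOfUnity k N))))
  rw [MulEquiv.toEquiv_eq_coe, EquivLike.coe_coe, mem_rootsOfUnity, mem_rootsOfUnity,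
    mem_rootsOfUnity, ← Prod.mk_eq_one, ← Prod.pow_mk, Prod.mk.eta, ← map_pow,
    MulEquiv.map_eq_one_iff]

namespace ZMod

theorem unitsMap_neg_one {m n : ℕ} (h : m ∣ n) : unitsMap h (-1) = -1 := by
  ext
  rw [unitsMap_val, Units.val_neg, Units.val_one, ← castHom_apply (h := h), map_neg, map_one,
    Units.val_neg, Units.val_one]

theorem ncard_one_neg_one_units {n : ℕ} (hn : 2 < n) : ({1, -1} : Set (ZMod n)ˣ).ncard = 2 := by
  have : Fact (2 < n) := ⟨hn⟩
  exact Set.ncard_pair fun h ↦ neg_one_ne_one (congrArg Units.val h).symm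

theorem sq_eq_one_of_castHom_eq_one {m n : ℕ} (h : m ∣ n) (hn : n = 2 * m) (hm : Even m)
    {x : ZMod n} (hx : castHom h (ZMod m) x = 1) : x ^ 2 = 1 := by
  obtain ⟨z, rfl⟩ := intCast_surjective x
  rw [map_intCast, ← Int.cast_one, intCast_eq_intCast_iff_dvd_sub] at hx
  obtain ⟨t, ht⟩ := hx
  obtain ⟨k, rfl⟩ := hm
  rw [← Int.cast_pow, ← Int.cast_one, intCast_eq_intCast_iff_dvd_sub, hn]
  push_cast at ht ⊢
  exact ⟨t - k * t ^ 2, by linear_combination (1 + z - 2 * k * t) * ht⟩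

theorem castHom_eq_one_or_neg_one_of_sq_eq_one (k : ℕ) {x : ZMod (2 ^ (k + 2))}
    (hx : x ^ 2 = 1) :
    castHom (pow_dvd_pow 2 (k + 1).le_succ) (ZMod (2 ^ (k + 1))) x = 1 ∨
      castHom (pow_dvd_pow 2 (k + 1).le_succ) (ZMod (2 ^ (k + 1))) x = -1 := by
  obtain ⟨z, rfl⟩ := intCast_surjective x
  rw [← Int.cast_pow, ← Int.cast_one, intCast_eq_intCast_iff_dvd_sub, dvd_sub_comm] at hx
  rw [map_intCast, ← Int.cast_one, ← Int.cast_neg, intCast_eq_intCast_iff_dvd_sub,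
    intCast_eq_intCast_iff_dvd_sub, dvd_sub_comm (b := 1), dvd_sub_comm (b := -1), sub_neg_eq_add]
  push_cast at hx ⊢
  exact Int.two_pow_dvd_sub_one_or_add_one k hx

theorem card_ker_unitsMap {m n : ℕ} (h : m ∣ n) (hn : n = 2 * m) (hm : Even m)
    (hm0 : m ≠ 0) : Nat.card (unitsMap h).ker = 2 := by
  subst hn
  have : NeZero m := ⟨hm0⟩
  have hcard := (unitsMap h).ker.card_mul_index
  rw [Subgroup.index_ker, MonoidHom.range_eq_top.mpr (unitsMap_surjective h), Subgroup.card_top,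
    Nat.card_eq_fintype_card (α := (ZMod m)ˣ), Nat.card_eq_fintype_card (α := (ZMod (2 * m))ˣ),
    card_units_eq_totient, card_units_eq_totient,
    Nat.totient_mul_of_prime_of_dvd Nat.prime_two hm.two_dvd] at hcard
  exact Nat.eq_of_mul_eq_mul_right (Nat.totient_pos.mpr (Nat.pos_of_ne_zero hm0)) hcard

theorem ker_unitsMap_le_rootsOfUnity_two {m n : ℕ} (h : m ∣ n) (hn : n = 2 * m) (hm : Even m) :
    (unitsMap h).ker ≤ rootsOfUnity 2 (ZMod n) :=
  fun u hu ↦ by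
    rw [mem_rootsOfUnity, Units.ext_iff, Units.val_pow_eq_pow_val, Units.val_one]
    refine sq_eq_one_of_castHom_eq_one h hn hm ?_
    simpa [MonoidHom.mem_ker, Units.ext_iff, unitsMap_val] using hu

theorem card_rootsOfUnity_two_eq_two_mul_card_map {m n : ℕ} (h : m ∣ n) (hn : n = 2 * m)
    (hm : Even m) (hm0 : m ≠ 0) :
    Nat.card (rootsOfUnity 2 (ZMod n)) =
      2 * Nat.card ((rootsOfUnity 2 (ZMod n)).map (unitsMap h)) := by
  have hcard := ((unitsMap h).domRestrict (rootsOfUnity 2 (ZMod n))).ker.card_mul_index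
  rw [Subgroup.index_ker, MonoidHom.domRestrict_range, MonoidHom.ker_domRestrict,
    Nat.card_congr (Subgroup.subgroupOfEquivOfLe
      (ker_unitsMap_le_rootsOfUnity_two h hn hm)).toEquiv,
    card_ker_unitsMap h hn hm hm0] at hcard
  exact hcard.symm

theorem card_rootsOfUnity_two_mul {m n : ℕ} (h : m.Coprime n) :
    Nat.card (rootsOfUnity 2 (ZMod (m * n))) =
      Nat.card (rootsOfUnity 2 (ZMod m)) * Nat.card (rootsOfUnity 2 (ZMod n)) := by
  rw [← card_rootsOfUnity_prod,
    Nat.card_congr ((chineseRemainder h).toMulEquiv.restrictRootsOfUnity 2).toEquiv]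

theorem card_rootsOfUnity_two_of_isCyclic {n : ℕ} (hn : 2 < n) [IsCyclic (ZMod n)ˣ] :
    Nat.card (rootsOfUnity 2 (ZMod n)) = 2 := by
  have : NeZero n := ⟨by omega⟩
  refine le_antisymm ?_ ?_
  · classical
    simpa [Nat.card_eq_fintype_card, Fintype.card_subtype, mem_rootsOfUnity] using
      IsCyclic.card_pow_eq_one_le (α := (ZMod n)ˣ) two_pos
  · calc 2 = ({1, -1} : Set (ZMod n)ˣ).ncard := (ncard_one_neg_one_units hn).symm
      _ ≤ (rootsOfUnity 2 (ZMod n) : Set (ZMod n)ˣ).ncard := by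
          refine Set.ncard_le_ncard ?_ (Set.toFinite _)
          rintro _ (rfl | rfl) <;> simp
      _ = _ := Nat.card_coe_set_eq _

theorem card_rootsOfUnity_two_two_pow (k : ℕ) :
    Nat.card (rootsOfUnity 2 (ZMod (2 ^ (k + 3)))) = 4 := by
  have h : 2 ^ (k + 2) ∣ 2 ^ (k + 3) := pow_dvd_pow 2 (k + 2).le_succ
  have hmap : ((rootsOfUnity 2 (ZMod (2 ^ (k + 3)))).map (unitsMap h) :
      Set (ZMod (2 ^ (k + 2)))ˣ) = {1, -1} := by
    ext u
    simp only [Subgroup.coe_map, Set.mem_image, SetLike.mem_coe, mem_rootsOfUnity,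
      Set.mem_insert_iff, Set.mem_singleton_iff]
    constructor
    · rintro ⟨ζ, hζ, rfl⟩
      have := castHom_eq_one_or_neg_one_of_sq_eq_one (k + 1) (x := (ζ : ZMod _))
        (by rw [← Units.val_pow_eq_pow_val, hζ, Units.val_one])
      simpa [Units.ext_iff, unitsMap_val] using this
    · rintro (rfl | rfl)
      · exact ⟨1, one_pow 2, map_one _⟩
      · exact ⟨-1, by simp, unitsMap_neg_one h⟩
  have h4 : 2 < 2 ^ (k + 2) :=
    Nat.lt_of_lt_of_le (by norm_num) (Nat.pow_le_pow_right two_pos (by omega : 2 ≤ k + 2))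
  rw [card_rootsOfUnity_two_eq_two_mul_card_map h (pow_succ' 2 _) (by simp [Nat.even_pow])
      (by positivity), ← SetLike.coe_sort_coe, Nat.card_coe_set_eq, hmap,
    ncard_one_neg_one_units h4]

theorem card_rootsOfUnity_two_of_odd {m : ℕ} (hm : Odd m) :
    Nat.card (rootsOfUnity 2 (ZMod m)) = 2 ^ m.primeFactors.card := by
  induction m using Nat.recOnPosPrimePosCoprime with
  | prime_pow p k hp hk =>
    have hp2 : p ≠ 2 := by
      rintro rfl
      exact Nat.not_even_iff_odd.mpr hm ((Nat.even_pow' hk.ne').mpr even_two)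
    have := isCyclic_units_of_prime_pow p hp hp2 k
    rw [card_rootsOfUnity_two_of_isCyclic, Nat.primeFactors_prime_pow hk.ne' hp,
      Finset.card_singleton, pow_one]
    calc 2 < p := lt_of_le_of_ne hp.two_le (Ne.symm hp2)
      _ ≤ p ^ k := Nat.le_self_pow hk.ne' p
  | zero => simp at hm
  | one => simp
  | coprime a b ha hb hab iha ihb =>
    rw [Nat.odd_mul] at hm
    rw [card_rootsOfUnity_two_mul hab, iha hm.1, ihb hm.2, ← pow_add, hab.primeFactors_mul,
      Finset.card_union_of_disjoint hab.disjoint_primeFactors]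

theorem card_rootsOfUnity_two_four_mul {d : ℕ} (hd : d ≠ 0) :
    Nat.card (rootsOfUnity 2 (ZMod (4 * d))) = 2 ^ (d.primeFactors.card + 1) := by
  obtain ⟨e, m, hm, rfl⟩ := Nat.exists_eq_two_pow_mul_odd hd
  have hcop : ∀ j, Nat.Coprime (2 ^ j) m := fun j ↦ (Nat.coprime_two_left.mpr hm).pow_left j
  rcases e with _ | e
  · rw [pow_zero, one_mul, card_rootsOfUnity_two_mul (m := 4) (hcop 2),
      card_rootsOfUnity_two_of_odd hm,
      @card_rootsOfUnity_two_of_isCyclic 4 (by norm_num) isCyclic_units_four]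
    ring
  · have h2 : 2 ∉ m.primeFactors := fun h2 ↦
      Nat.not_even_iff_odd.mpr hm (even_iff_two_dvd.mpr (Nat.dvd_of_mem_primeFactors h2))
    rw [← mul_assoc, show 4 * 2 ^ (e + 1) = 2 ^ (e + 3) by ring,
      card_rootsOfUnity_two_mul (hcop _), card_rootsOfUnity_two_two_pow,
      card_rootsOfUnity_two_of_odd hm, (hcop _).primeFactors_mul,
      Nat.primeFactors_prime_pow e.succ_ne_zero Nat.prime_two,
      Finset.card_union_of_disjoint (Finset.disjoint_singleton_left.mpr h2), Finset.card_singleton]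
    ring

theorem card_subgroup_eq_two_of_mem_iff {n : ℕ} (hn : 2 < n) {K : Subgroup (ZMod n)ˣ}
    (hK : -1 ∈ K) (N : Subgroup K)
    (hN : ∀ x : K, x ∈ N ↔ ((x : (ZMod n)ˣ) = 1 ∨ (x : (ZMod n)ˣ) = -1)) :
    Nat.card N = 2 := by
  have hNpm : (N.map K.subtype : Set (ZMod n)ˣ) = {1, -1} := by
    ext b
    simp only [Subgroup.coe_map, Set.mem_image, SetLike.mem_coe, Subgroup.coe_subtype, hN,
      Set.mem_insert_iff, Set.mem_singleton_iff]
    constructor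
    · rintro ⟨x, hx, rfl⟩
      exact hx
    · rintro (rfl | rfl)
      · exact ⟨1, Or.inl rfl, rfl⟩
      · exact ⟨⟨-1, hK⟩, Or.inr rfl, rfl⟩
  rw [← Subgroup.card_map_of_injective K.subtype_injective, ← SetLike.coe_sort_coe, hNpm,
    Nat.card_coe_set_eq, ncard_one_neg_one_units hn]

end ZMod

/-- The group of isometries of the discriminant group `A ≅ ℤ/2d` of
`⟨-2d⟩ ⊕ U⊕U ⊕ E8(-1)⊕E8(-1)` -- i.e. multiplications by units `a mod 2d`
admitting a lift `a mod 4d` with `a² ≡ 1 (mod 4d)` -- taken modulo `±id`,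
is an elementary abelian 2-group of order `2^(p(d)-1)`, where `p(1) = 1` and
`p(d)` is the number of distinct primes dividing `d` for `d ≥ 2`. -/
theorem stmt0 (d : ℕ) (hd : 0 < d) (hdvd : (2 * d) ∣ (4 * d))
    (K : Subgroup (ZMod (2 * d))ˣ)
    (hK : ∀ b, b ∈ K ↔ ∃ a : (ZMod (4 * d))ˣ, a ^ 2 = 1 ∧ ZMod.unitsMap hdvd a = b)
    (N : Subgroup K)
    (hN : ∀ x : K, x ∈ N ↔ ((x : (ZMod (2 * d))ˣ) = 1 ∨ (x : (ZMod (2 * d))ˣ) = -1)) :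
    (∀ x : K ⧸ N, x * x = 1) ∧
    Nat.card (K ⧸ N) = 2 ^ ((if d = 1 then 1 else d.primeFactors.card) - 1) := by
  have hsq : ∀ y : K, y * y = 1 := fun y ↦ by
    obtain ⟨a, ha, hay⟩ := (hK y).mp y.2
    ext
    rw [Subgroup.coe_mul, ← hay, ← map_mul, ← sq, ha, map_one, OneMemClass.coe_one]
  refine ⟨fun x ↦ ?_, ?_⟩
  · induction x using QuotientGroup.induction_on with | H y
    rw [← QuotientGroup.mk_mul, hsq y, QuotientGroup.mk_one]
  rcases eq_or_ne d 1 with rfl | hd1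
  · simp
  have hKS : K = (rootsOfUnity 2 (ZMod (4 * d))).map (ZMod.unitsMap hdvd) := by
    ext b
    simp only [hK, Subgroup.mem_map, mem_rootsOfUnity]
  have hS := ZMod.card_rootsOfUnity_two_eq_two_mul_card_map hdvd (by ring) (even_two_mul d)
    (by omega)
  have hN2 := ZMod.card_subgroup_eq_two_of_mem_iff (by omega)
    ((hK _).mpr ⟨-1, by simp, ZMod.unitsMap_neg_one hdvd⟩) N hN
  rw [← hKS, ZMod.card_rootsOfUnity_two_four_mul hd.ne',
    N.card_eq_card_quotient_mul_card_subgroup, hN2] at hS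
  obtain ⟨t, ht⟩ : ∃ t, d.primeFactors.card = t + 1 := Nat.exists_eq_succ_of_ne_zero
    (Finset.card_ne_zero.mpr (Nat.nonempty_primeFactors.mpr (by omega)))
  rw [if_neg hd1, ht, Nat.add_sub_cancel]
  rw [ht, pow_succ, pow_succ] at hS
  omega
end

section
/- Let L_{2d} = ⟨k⟩ ⊕ M with k² = −2d and M = U^{⊕2} ⊕ E8(−1)^{⊕2} unimodular. Let β = αk + mj ∈ L_{2d} be primitive with j ∈ M primitive, α, m ∈ Z, β² < 0, and suppose β defines a reflection r_β ∈ O(L_{2d}) (i.e. β² divides 2(x·β) for all x ∈ L_{2d}) which is nontrivial modulo ±id on the discriminant group. Then β² divides 2m and β² divides 2d. -/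
/-- Let `β = αk + mj` be a primitive vector of `L_{2d} = ⟨k⟩ ⊕ M` with `k² = −2d`,
`M` unimodular and even, `j ∈ M` primitive, `β² < 0`. Primitivity of `β` means
`gcd(α,m) = 1`, and since `M` is unimodular the values `x·β` for `x ∈ L_{2d}` are
exactly the integers `−2daα + mb` (`a, b ∈ ℤ`). If `β` defines a reflection
`r_β ∈ O(L_{2d})`, i.e. `β² ∣ 2(x·β)` for all `x`, which is nontrivial modulo
`±id` on the discriminant group (so that `mj ≠ 0`), then `β² ∣ 2m` and `β² ∣ 2d`.
Here `jj = j²` (an even integer) and `β² = −2dα² + m²·j²`. -/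
theorem stmt8 (d α m jj β2 : ℤ) (hd : 0 < d) (hjj : Even jj)
    (hprim : IsCoprime α m) (hm : m ≠ 0)
    (hβ2 : β2 = -2 * d * α ^ 2 + m ^ 2 * jj) (hneg : β2 < 0)
    (hint : ∀ a b : ℤ, β2 ∣ 2 * (-2 * d * a * α + m * b)) :
    β2 ∣ 2 * m ∧ β2 ∣ 2 * d := by
  -- β² ∣ 2m from the integrality condition with a = 0, b = 1
  have h2m : β2 ∣ 2 * m := by
    have := hint 0 1
    simpa using this
  refine ⟨h2m, ?_⟩
  -- write jj = 2 j'
  obtain ⟨j', hj'⟩ := hjj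
  -- β2 = 2 γ with γ = -d α² + m² j'
  set γ : ℤ := -d * α ^ 2 + m ^ 2 * j' with hγ
  have hβγ : β2 = 2 * γ := by rw [hβ2, hγ, hj']; ring
  have hγm : γ ∣ m := by
    have : 2 * γ ∣ 2 * m := hβγ ▸ h2m
    exact (mul_dvd_mul_iff_left (two_ne_zero)).mp this
  -- γ divides d α²
  have hγd : γ ∣ d * α ^ 2 := by
    have h1 : γ ∣ m ^ 2 * j' := Dvd.dvd.mul_right (dvd_pow hγm two_ne_zero) j'
    have h2 : d * α ^ 2 = m ^ 2 * j' - γ := by rw [hγ]; ring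
    rw [h2]
    exact dvd_sub h1 dvd_rfl
  -- γ is coprime to α since γ ∣ m and gcd(α, m) = 1
  have hcop : IsCoprime γ (α ^ 2) :=
    ((hprim.symm.of_isCoprime_of_dvd_left hγm).pow_right)
  have : γ ∣ d := hcop.dvd_of_dvd_mul_right hγd
  rw [hβγ]
  exact mul_dvd_mul_left 2 this
end
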